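/- Let T be a bounded linear operator on a Banach space X such that T is an (m,p)-isometry for some integer m ≥ 1 and some p ∈ (0,∞), and T is also a (μ,∞)-isometry for some integer μ ≥ 1. Then T is an isometry, i.e. ‖Tx‖ = ‖x‖ for all x ∈ X. -/
import Mathlib


/-- T is an (m,∞)-isometry: for every x, the maximum of the norms of T^k x over even
k in {0,...,m} equals the maximum over odd k in {0,...,m}. -/
def IsMInfIsometry {𝕜 X : Type*} [RCLike 𝕜] [NormedAddCommGroup X] [NormedSpace 𝕜 X]
    (T : X →L[𝕜] X) (m : ℕ) : Prop :=
  ∀ x : X,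
    (((Finset.range (m + 1)).filter fun k => Even k).sup fun k => ‖(T ^ k) x‖₊) =
    (((Finset.range (m + 1)).filter fun k => Odd k).sup fun k => ‖(T ^ k) x‖₊)

/-- T is an (m,p)-isometry. -/
def IsMPIsometry {𝕜 X : Type*} [RCLike 𝕜] [NormedAddCommGroup X] [NormedSpace 𝕜 X]
    (T : X →L[𝕜] X) (m : ℕ) (p : ℝ) : Prop :=
  ∀ x : X, ∑ k ∈ Finset.range (m + 1), (-1 : ℝ) ^ k * (m.choose k : ℝ) * ‖(T ^ k) x‖ ^ p = 0

open Finset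

/-- A bounded sequence with vanishing m-th forward difference is constant. -/
lemma const_of_bdd (m : ℕ) : ∀ (f : ℕ → ℝ) (C : ℝ), (∀ n, |f n| ≤ C) →
    (∀ n, (fwdDiff (1:ℕ))^[m] f n = 0) → ∀ n, f n = f 0 := by
  induction m with
  | zero =>
    intro f C hb hd n
    simp only [Function.iterate_zero, id_eq] at hd
    rw [hd n, hd 0]
  | succ m ih =>
    intro f C hb hd
    have hg : ∀ n, (fwdDiff 1 f) n = (fwdDiff 1 f) 0 := by
      apply ih (fwdDiff 1 f) (C + C)
      · intro n
        simp only [fwdDiff]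
        calc |f (n + 1) - f n| ≤ |f (n+1)| + |f n| := abs_sub _ _
          _ ≤ C + C := add_le_add (hb _) (hb _)
      · intro n
        have := hd n
        rwa [Function.iterate_succ_apply] at this
    set c := fwdDiff 1 f 0 with hc
    have hstep : ∀ n, f (n + 1) = f n + c := by
      intro n
      have := hg n
      simp only [fwdDiff] at this
      linarith
    have hlin : ∀ n : ℕ, f n = f 0 + n * c := by
      intro n
      induction n with
      | zero => simp
      | succ k ihk => rw [hstep k, ihk]; push_cast; ring
    have hc0 : c = 0 := by
      by_contra hne
      have habs : ∀ n : ℕ, (n : ℝ) * |c| ≤ C + |f 0| := by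
        intro n
        have h1 : |(n : ℝ) * c| = |f n - f 0| := by rw [hlin n]; ring_nf
        have h2 : |f n - f 0| ≤ |f n| + |f 0| := abs_sub _ _
        have h3 : |(n:ℝ) * c| = (n:ℝ) * |c| := by
          rw [abs_mul, abs_of_nonneg (Nat.cast_nonneg n)]
        nlinarith [hb n]
      obtain ⟨n, hn⟩ := exists_nat_gt ((C + |f 0|) / |c|)
      have hcpos : 0 < |c| := abs_pos.2 hne
      have := habs n
      rw [div_lt_iff₀ hcpos] at hn
      linarith
    intro n
    rw [hlin n, hc0]; ring

/-- Orbit-norm boundedness from the (μ,∞)-isometry condition. -/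
lemma orbit_bdd {𝕜 X : Type*} [RCLike 𝕜] [NormedAddCommGroup X] [NormedSpace 𝕜 X]
    (T : X →L[𝕜] X) (μ : ℕ)
    (h₂ : IsMInfIsometry T μ)
    (x : X) : ∀ n, ‖(T ^ n) x‖₊ ≤ (Finset.range μ).sup fun k => ‖(T ^ k) x‖₊ := by
  intro n
  induction n using Nat.strong_induction_on with
  | _ n ih =>
    rcases lt_or_ge n μ with hn | hn
    · exact Finset.le_sup (f := fun k => ‖(T ^ k) x‖₊) (mem_range.2 hn)
    · set j := n - μ with hj
      have hjn : j + μ = n := Nat.sub_add_cancel hn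
      have hpow : ∀ k, (T ^ k) ((T ^ j) x) = (T ^ (j + k)) x := by
        intro k
        rw [add_comm, pow_add, ContinuousLinearMap.mul_apply]
      have key := h₂ ((T ^ j) x)
      have hbound : ∀ s : Finset ℕ, (∀ k ∈ s, j + k < n) →
          (s.sup fun k => ‖(T ^ k) ((T ^ j) x)‖₊) ≤
            (Finset.range μ).sup fun k => ‖(T ^ k) x‖₊ := by
        intro s hs
        apply Finset.sup_le
        intro k hk
        rw [hpow k]
        exact ih _ (hs k hk)
      rcases Nat.even_or_odd μ with hpar | hpar
      · have h1 : ‖(T ^ μ) ((T ^ j) x)‖₊ ≤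
            ((Finset.range (μ + 1)).filter fun k => Even k).sup
              fun k => ‖(T ^ k) ((T ^ j) x)‖₊ :=
          Finset.le_sup (f := fun k => ‖(T ^ k) ((T ^ j) x)‖₊)
            (by simp [Finset.mem_filter, Finset.mem_range, hpar])
        rw [key] at h1
        calc ‖(T ^ n) x‖₊ = ‖(T ^ μ) ((T ^ j) x)‖₊ := by rw [hpow, hjn]
          _ ≤ _ := h1
          _ ≤ _ := by
            apply hbound
            intro k hk
            simp only [Finset.mem_filter, Finset.mem_range] at hk
            have : k ≠ μ := fun h => (Nat.not_odd_iff_even.2 hpar) (h ▸ hk.2)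
            omega
      · have h1 : ‖(T ^ μ) ((T ^ j) x)‖₊ ≤
            ((Finset.range (μ + 1)).filter fun k => Odd k).sup
              fun k => ‖(T ^ k) ((T ^ j) x)‖₊ :=
          Finset.le_sup (f := fun k => ‖(T ^ k) ((T ^ j) x)‖₊)
            (by simp [Finset.mem_filter, Finset.mem_range, hpar])
        rw [← key] at h1
        calc ‖(T ^ n) x‖₊ = ‖(T ^ μ) ((T ^ j) x)‖₊ := by rw [hpow, hjn]
          _ ≤ _ := h1
          _ ≤ _ := by
            apply hbound
            intro k hk
            simp only [Finset.mem_filter, Finset.mem_range] at hk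
            have : k ≠ μ := fun h => (Nat.not_even_iff_odd.2 hpar) (h ▸ hk.2)
            omega

/-- The m-th forward difference of `n ↦ ‖Tⁿ x‖ ^ p` vanishes for an (m,p)-isometry. -/
lemma fwdDiff_vanish {𝕜 X : Type*} [RCLike 𝕜] [NormedAddCommGroup X] [NormedSpace 𝕜 X]
    (T : X →L[𝕜] X) (m : ℕ) (p : ℝ) (h₁ : IsMPIsometry T m p) (x : X) :
    ∀ n, (fwdDiff (1:ℕ))^[m] (fun n => ‖(T ^ n) x‖ ^ p) n = 0 := by
  intro n
  rw [fwdDiff_iter_eq_sum_shift]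
  have h := h₁ ((T ^ n) x)
  have hcong : ∀ k ∈ range (m + 1),
      (((-1 : ℤ) ^ (m - k) * (m.choose k : ℤ)) • (‖(T ^ (n + k • 1)) x‖ ^ p) : ℝ) =
      (-1 : ℝ) ^ m * ((-1 : ℝ) ^ k * (m.choose k : ℝ) * ‖(T ^ k) ((T ^ n) x)‖ ^ p) := by
    intro k hk
    rw [mem_range] at hk
    have hk' : k ≤ m := Nat.lt_succ_iff.1 hk
    have hT : (T ^ k) ((T ^ n) x) = (T ^ (n + k • 1)) x := by
      rw [smul_eq_mul, mul_one, add_comm, pow_add, ContinuousLinearMap.mul_apply]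
    rw [hT, zsmul_eq_mul]
    push_cast
    have hsgn : ((-1 : ℝ)) ^ (m - k) = (-1) ^ m * (-1) ^ k := by
      have h1 : ((-1 : ℝ)) ^ (m - k) * (-1) ^ k = (-1) ^ m := by
        rw [← pow_add, Nat.sub_add_cancel hk']
      have h2 : ((-1 : ℝ)) ^ k * (-1) ^ k = 1 := by
        rw [← pow_add, Even.neg_one_pow ⟨k, rfl⟩]
      calc ((-1 : ℝ)) ^ (m - k) = (-1) ^ (m-k) * ((-1)^k * (-1)^k) := by rw [h2, mul_one]
        _ = (-1) ^ m * (-1) ^ k := by rw [← mul_assoc, h1]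
    rw [hsgn]; ring
  rw [Finset.sum_congr rfl hcong, ← Finset.mul_sum, h, mul_zero]

theorem stmt_19 {𝕜 X : Type*} [RCLike 𝕜] [NormedAddCommGroup X] [NormedSpace 𝕜 X]
    [CompleteSpace X] (T : X →L[𝕜] X) (m : ℕ) (hm : 1 ≤ m) (p : ℝ) (hp : 0 < p)
    (μ : ℕ) (hμ : 1 ≤ μ)
    (h₁ : IsMPIsometry T m p) (h₂ : IsMInfIsometry T μ) :
    ∀ x : X, ‖T x‖ = ‖x‖ := by
  intro x
  set f : ℕ → ℝ := fun n => ‖(T ^ n) x‖ ^ p with hf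
  have hb : ∀ n, |f n| ≤ (((Finset.range μ).sup fun k => ‖(T ^ k) x‖₊ : NNReal) : ℝ) ^ p := by
    intro n
    rw [abs_of_nonneg (Real.rpow_nonneg (norm_nonneg _) p)]
    apply Real.rpow_le_rpow (norm_nonneg _) _ hp.le
    exact_mod_cast orbit_bdd T μ h₂ x n
  have hd := fwdDiff_vanish T m p h₁ x
  have hconst := const_of_bdd m f _ hb hd
  have h10 : f 1 = f 0 := hconst 1
  simp only [hf, pow_one, pow_zero, ContinuousLinearMap.one_apply] at h10
  exact Real.rpow_left_injOn hp.ne' (norm_nonneg _) (norm_nonneg _) h10
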